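/- Assume (H1), (H3), and (H4). Then the Bellman problem sup_{P∈𝒫}{−A(P)U + y(P)} = 0 has at most one solution U ∈ ℝⁿ. -/

import Mathlib

open Filter Topology Finset

open scoped Classical

noncomputable section

/-- Row `i` of `A` is strictly diagonally dominant (SDD). -/
def SDDRow {n : ℕ} (A : Matrix (Fin n) (Fin n) ℝ) (i : Fin n) : Prop :=
  ∑ j ∈ Finset.univ.erase i, |A i j| < |A i i|

/-- `A` is weakly diagonally dominant (WDD). -/
def WDD {n : ℕ} (A : Matrix (Fin n) (Fin n) ℝ) : Prop :=
  ∀ i, ∑ j ∈ Finset.univ.erase i, |A i j| ≤ |A i i|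

/-- `A` is a Z-matrix: nonpositive off-diagonal entries. -/
def ZMat {n : ℕ} (A : Matrix (Fin n) (Fin n) ℝ) : Prop :=
  ∀ i j, i ≠ j → A i j ≤ 0

/-- Row-decoupled data. -/
def RowDecoupled {n : ℕ} {P : Fin n → Type*}
    (A : (∀ i, P i) → Matrix (Fin n) (Fin n) ℝ)
    (y : (∀ i, P i) → (Fin n → ℝ)) : Prop :=
  ∀ p q : ∀ i, P i, ∀ i, p i = q i →
    (∀ j, A p i j = A q i j) ∧ y p i = y q i

/-- `U` solves the Bellman problem `sup_{P∈𝒫} {−A(P)U + y(P)} = 0`. -/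
def IsBellmanSol {n : ℕ} {P : Fin n → Type*}
    (A : (∀ i, P i) → Matrix (Fin n) (Fin n) ℝ)
    (y : (∀ i, P i) → (Fin n → ℝ)) (U : Fin n → ℝ) : Prop :=
  ∀ i, IsLUB (Set.range fun p => y p i - (A p).mulVec U i) 0

/-- (H1): `P ↦ A(P)⁻¹` is bounded on the set of controls with nonsingular matrix. -/
def H1 {n : ℕ} {P : Fin n → Type*}
    (A : (∀ i, P i) → Matrix (Fin n) (Fin n) ℝ) : Prop :=
  ∃ C, ∀ p, IsUnit (A p).det → ∀ i j, |(A p)⁻¹ i j| ≤ C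

/-- (H3): every `A(P)` is a WDD Z-matrix with nonnegative diagonal entries whose diagonal
entries are at most `1` on rows that are not SDD. -/
def H3 {n : ℕ} {P : Fin n → Type*}
    (A : (∀ i, P i) → Matrix (Fin n) (Fin n) ℝ) : Prop :=
  ∀ p, ZMat (A p) ∧ WDD (A p) ∧ (∀ i, 0 ≤ A p i i) ∧
    ∀ i, ¬ SDDRow (A p) i → A p i i ≤ 1

/-- `ŷ(P)ᵢ = y(P)ᵢ` if row `i` of `A(P)` is not SDD, and `−∞` otherwise. -/
def yhat {n : ℕ} {P : Fin n → Type*}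
    (A : (∀ i, P i) → Matrix (Fin n) (Fin n) ℝ)
    (y : (∀ i, P i) → (Fin n → ℝ)) (p : ∀ i, P i) (i : Fin n) : EReal :=
  if SDDRow (A p) i then ⊥ else ((y p i : ℝ) : EReal)

/-- The operator `𝕄U = U + 𝔸U` on vectors with entries in `ℝ ∪ {−∞}`, where
`[𝔸U]ᵢ = sup_P [−A(P)U + ŷ(P)]ᵢ`, computed with the conventions `r + (−∞) = −∞`,
`t·(−∞) = −∞` for `t > 0` and `0·(−∞) = 0`; entrywise this reads
`[𝕄U]ᵢ = sup_P { (1 − A(P)ᵢᵢ)·Uᵢ + Σ_{j≠i} (−A(P)ᵢⱼ)·Uⱼ + ŷ(P)ᵢ }`. -/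
def Mbb {n : ℕ} {P : Fin n → Type*}
    (A : (∀ i, P i) → Matrix (Fin n) (Fin n) ℝ)
    (y : (∀ i, P i) → (Fin n → ℝ)) (U : Fin n → EReal) : Fin n → EReal :=
  fun i => ⨆ p : ∀ i, P i,
    (((1 - A p i i : ℝ) : EReal) * U i
      + ∑ j ∈ Finset.univ.erase i, ((-A p i j : ℝ) : EReal) * U j
      + yhat A y p i)

/-- (H4): consecutive applications of `𝕄` are eventually strictly suboptimal. -/
def H4 {n : ℕ} {P : Fin n → Type*}
    (A : (∀ i, P i) → Matrix (Fin n) (Fin n) ℝ)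
    (y : (∀ i, P i) → (Fin n → ℝ)) : Prop :=
  ∀ (U : Fin n → ℝ) (i : Fin n), ∃ m₁ m₂ : ℕ, m₁ < m₂ ∧
    (Mbb A y)^[m₂] (fun j => ((U j : ℝ) : EReal)) i
      < (Mbb A y)^[m₁] (fun j => ((U j : ℝ) : EReal)) i

/-!
Fix `ε > 0` and follow, from a row `i`, the nonzero off-diagonal entries of `ε`-optimal
controls for `U`. If every row reaches an SDD row this way, row decoupling glues the witnessing
controls into one control `q` for which `A q` is a weakly chained diagonally dominant Z-matrix,
hence monotone; as `A q (U - V) ≤ ε`, (H1) gives `U - V ≤ n C ε`. Otherwise the rows that reach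
no SDD row form a trap on which `𝕄^[m] U ≥ U - m ε'` for every small `ε'`, while `𝕄^[m] U ≤ U`
because `U` is a subsolution; together these contradict (H4). Letting `ε → 0` gives `U ≤ V`.
-/

open scoped Matrix

theorem EReal.coe_finset_sum {α : Type*} (s : Finset α) (f : α → ℝ) :
    ((∑ j ∈ s, f j : ℝ) : EReal) = ∑ j ∈ s, (f j : EReal) :=
  map_sum (⟨⟨Real.toEReal, EReal.coe_zero⟩, EReal.coe_add⟩ : ℝ →+ EReal) f s

namespace Matrix

variable {ι : Type*} [Fintype ι] [DecidableEq ι] {B : Matrix ι ι ℝ}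

theorem isUnit_det_of_mulVec_nonneg_imp (hB : ∀ x, 0 ≤ B *ᵥ x → 0 ≤ x) : IsUnit B.det := by
  refine isUnit_iff_ne_zero.mpr fun h0 => ?_
  obtain ⟨v, hv0, hv⟩ := exists_mulVec_eq_zero_iff.mpr h0
  refine hv0 (le_antisymm ?_ (hB v hv.ge))
  exact neg_nonneg.mp (hB (-v) (by rw [mulVec_neg, hv, neg_zero]))

theorem le_card_mul_of_mulVec_le (hB : ∀ x, 0 ≤ B *ᵥ x → 0 ≤ x) {C ε : ℝ}
    (hC : ∀ i j, |B⁻¹ i j| ≤ C) (hε : 0 ≤ ε) {w : ι → ℝ} (hw : B *ᵥ w ≤ fun _ => ε) (i : ι) :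
    w i ≤ Fintype.card ι * C * ε := by
  have hdet := isUnit_det_of_mulVec_nonneg_imp hB
  have hle : w ≤ B⁻¹ *ᵥ fun _ => ε := by
    refine sub_nonneg.mp (hB _ ?_)
    rw [mulVec_sub, mulVec_mulVec, mul_nonsing_inv _ hdet, one_mulVec]
    exact sub_nonneg.mpr hw
  calc w i ≤ ∑ j, B⁻¹ i j * ε := hle i
    _ ≤ ∑ _j : ι, C * ε :=
      sum_le_sum fun j _ => mul_le_mul_of_nonneg_right ((le_abs_self _).trans (hC i j)) hε
    _ = Fintype.card ι * C * ε := by simp [mul_assoc]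

end Matrix

section DiagonalDominance

variable {n : ℕ} {B : Matrix (Fin n) (Fin n) ℝ}

namespace ZMat

theorem sum_row_eq_abs_diag_sub (hZ : ZMat B) {i : Fin n} (hdiag : 0 ≤ B i i) :
    ∑ j, B i j = |B i i| - ∑ j ∈ univ.erase i, |B i j| := by
  rw [← add_sum_erase _ _ (mem_univ i), abs_of_nonneg hdiag, sub_eq_add_neg, ← sum_neg_distrib]
  congr 1
  exact sum_congr rfl fun j hj => by rw [abs_of_nonpos (hZ i j (ne_of_mem_erase hj).symm), neg_neg]

theorem sddRow_iff_sum_row_pos (hZ : ZMat B) {i : Fin n} (hdiag : 0 ≤ B i i) :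
    SDDRow B i ↔ 0 < ∑ j, B i j := by
  rw [sum_row_eq_abs_diag_sub hZ hdiag, sub_pos]
  rfl

theorem sum_row_nonneg (hZ : ZMat B) (hW : WDD B) {i : Fin n} (hdiag : 0 ≤ B i i) :
    0 ≤ ∑ j, B i j := by
  rw [sum_row_eq_abs_diag_sub hZ hdiag, sub_nonneg]
  exact hW i

theorem sum_row_eq_zero_of_not_sddRow (hZ : ZMat B) (hW : WDD B) {i : Fin n}
    (hdiag : 0 ≤ B i i) (h : ¬SDDRow B i) : ∑ j, B i j = 0 :=
  le_antisymm (not_lt.mp (mt (hZ.sddRow_iff_sum_row_pos hdiag).mpr h)) (hZ.sum_row_nonneg hW hdiag)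

theorem not_sddRow_and_eq_of_mulVec_nonneg_of_min (hZ : ZMat B) (hW : WDD B)
    (hdiag : ∀ i, 0 ≤ B i i) {x : Fin n → ℝ} {k : Fin n} (hmin : ∀ j, x k ≤ x j) (hneg : x k < 0)
    (hx : 0 ≤ (B *ᵥ x) k) :
    ¬SDDRow B k ∧ ∀ j, j ≠ k → B k j ≠ 0 → x j = x k := by
  have hsplit : (B *ᵥ x) k = (∑ j, B k j) * x k + ∑ j, B k j * (x j - x k) := by
    simp only [Matrix.mulVec, dotProduct, mul_sub, sum_sub_distrib, sum_mul]
    ring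
  have hterm : ∀ j, B k j * (x j - x k) ≤ 0 := fun j => by
    rcases eq_or_ne j k with rfl | hjk
    · simp
    · exact mul_nonpos_of_nonpos_of_nonneg (hZ k j hjk.symm) (sub_nonneg.mpr (hmin j))
  have hdiagPart : (∑ j, B k j) * x k ≤ 0 :=
    mul_nonpos_of_nonneg_of_nonpos (hZ.sum_row_nonneg hW (hdiag k)) hneg.le
  have hoffPart : ∑ j, B k j * (x j - x k) ≤ 0 := sum_nonpos fun j _ => hterm j
  refine ⟨fun hsdd => ?_, fun j hjk hBkj => ?_⟩
  · have := mul_neg_of_pos_of_neg ((hZ.sddRow_iff_sum_row_pos (hdiag k)).mp hsdd) hneg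
    linarith
  · have hzero : ∑ j, B k j * (x j - x k) = 0 := by linarith
    have := (sum_eq_zero_iff_of_nonpos fun j _ => hterm j).mp hzero j (mem_univ j)
    linarith [(mul_eq_zero.mp this).resolve_left hBkj]

end ZMat

/-- The weak chaining condition of the paper (every row is joined to an SDD row by a walk
along nonzero off-diagonal entries), witnessed by a rank `r` that decreases along the walk. -/
def IsSDDChainRank (B : Matrix (Fin n) (Fin n) ℝ) (r : Fin n → ℕ) : Prop :=
  ∀ i, SDDRow B i ∨ ∃ j, j ≠ i ∧ B i j ≠ 0 ∧ r j < r i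

theorem ZMat.nonneg_of_mulVec_nonneg (hZ : ZMat B) (hW : WDD B) (hdiag : ∀ i, 0 ≤ B i i)
    {r : Fin n → ℕ} (hr : IsSDDChainRank B r) {x : Fin n → ℝ} (hx : 0 ≤ B *ᵥ x) : 0 ≤ x := by
  intro i
  by_contra hneg
  have : Nonempty (Fin n) := ⟨i⟩
  obtain ⟨k₀, hk₀⟩ := Finite.exists_min x
  have hneg₀ : x k₀ < 0 := (hk₀ i).trans_lt (not_le.mp hneg)
  suffices ∀ m k, r k = m → x k ≠ x k₀ from this _ k₀ rfl rfl
  intro m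
  induction m using Nat.strong_induction_on with
  | _ m ih =>
    rintro k rfl hk
    obtain ⟨hnsdd, hflat⟩ := hZ.not_sddRow_and_eq_of_mulVec_nonneg_of_min hW hdiag
      (fun j => hk ▸ hk₀ j) (hk ▸ hneg₀) (hx k)
    obtain ⟨j, hjk, hBkj, hrj⟩ := (hr k).resolve_left hnsdd
    exact ih _ hrj j rfl ((hflat j hjk hBkj).trans hk)

end DiagonalDominance

section Bellman

variable {n : ℕ} {P : Fin n → Type*}
  (A : (∀ i, P i) → Matrix (Fin n) (Fin n) ℝ) (y : (∀ i, P i) → Fin n → ℝ)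

def IsNearOptimal (U : Fin n → ℝ) (ε : ℝ) (p : ∀ i, P i) (i : Fin n) : Prop :=
  -ε ≤ y p i - (A p *ᵥ U) i

/-- `ReachesSDD A y U ε k i`: from row `i`, a walk of fewer than `k` steps along nonzero
off-diagonal entries of `ε`-optimal controls for `U` ends at an SDD row. -/
def ReachesSDD (U : Fin n → ℝ) (ε : ℝ) : ℕ → Fin n → Prop
  | 0, _ => False
  | k + 1, i => ∃ p, IsNearOptimal A y U ε p i ∧
      (SDDRow (A p) i ∨ ∃ j, j ≠ i ∧ A p i j ≠ 0 ∧ ReachesSDD U ε k j)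

def IsTrap (U : Fin n → ℝ) (ε : ℝ) (J : Set (Fin n)) : Prop :=
  ∀ i ∈ J, ∀ p, IsNearOptimal A y U ε p i →
    ¬SDDRow (A p) i ∧ ∀ j, j ≠ i → A p i j ≠ 0 → j ∈ J

def mbbTerm (p : ∀ i, P i) (z : Fin n → EReal) (i : Fin n) : EReal :=
  ((1 - A p i i : ℝ) : EReal) * z i + ∑ j ∈ univ.erase i, ((-A p i j : ℝ) : EReal) * z j
    + yhat A y p i

variable {A y} {U V : Fin n → ℝ} {ε : ℝ}

theorem IsBellmanSol.residual_nonpos (hU : IsBellmanSol A y U) (p : ∀ i, P i) (i : Fin n) :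
    y p i - (A p *ᵥ U) i ≤ 0 :=
  (hU i).1 (Set.mem_range_self p)

theorem IsBellmanSol.exists_isNearOptimal (hU : IsBellmanSol A y U) (hε : 0 < ε) (i : Fin n) :
    ∃ p, IsNearOptimal A y U ε p i := by
  obtain ⟨_, ⟨p, rfl⟩, hp, -⟩ := (hU i).exists_between (neg_lt_zero.mpr hε)
  exact ⟨p, hp.le⟩

theorem RowDecoupled.isNearOptimal_iff (hrd : RowDecoupled A y) {p q : ∀ i, P i} {i : Fin n}
    (h : p i = q i) : IsNearOptimal A y U ε p i ↔ IsNearOptimal A y U ε q i := by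
  obtain ⟨hA, hy⟩ := hrd p q i h
  simp only [IsNearOptimal, Matrix.mulVec, dotProduct, hA, hy]

theorem RowDecoupled.sddRow_iff (hrd : RowDecoupled A y) {p q : ∀ i, P i} {i : Fin n}
    (h : p i = q i) : SDDRow (A p) i ↔ SDDRow (A q) i := by
  obtain ⟨hA, -⟩ := hrd p q i h
  simp only [SDDRow, hA]

theorem exists_control_isSDDChainRank (hrd : RowDecoupled A y)
    (hreach : ∀ i, ∃ k, ReachesSDD A y U ε k i) :
    ∃ q r, (∀ i, IsNearOptimal A y U ε q i) ∧ IsSDDChainRank (A q) r := by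
  set r : Fin n → ℕ := fun i => Nat.find (hreach i)
  have hstep : ∀ i, ∃ p, IsNearOptimal A y U ε p i ∧
      (SDDRow (A p) i ∨ ∃ j, j ≠ i ∧ A p i j ≠ 0 ∧ r j < r i) := by
    intro i
    have hspec : ReachesSDD A y U ε (r i) i := Nat.find_spec (hreach i)
    rcases hri : r i with _ | k
    · rw [hri] at hspec
      exact hspec.elim
    · rw [hri] at hspec
      obtain ⟨p, hp, hs | ⟨j, hji, hA, hj⟩⟩ := hspec
      · exact ⟨p, hp, Or.inl hs⟩
      · exact ⟨p, hp, Or.inr ⟨j, hji, hA, Nat.lt_succ_of_le (Nat.find_min' (hreach j) hj)⟩⟩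
  choose p hp hchain using hstep
  set q : ∀ i, P i := fun i => p i i
  have hpq : ∀ i, p i i = q i := fun _ => rfl
  refine ⟨q, r, fun i => (hrd.isNearOptimal_iff (hpq i)).mp (hp i), fun i => ?_⟩
  rcases hchain i with hs | ⟨j, hji, hA, hr⟩
  · exact Or.inl ((hrd.sddRow_iff (hpq i)).mp hs)
  · exact Or.inr ⟨j, hji, (hrd _ _ i (hpq i)).1 j ▸ hA, hr⟩

theorem sub_le_of_forall_reachesSDD (hrd : RowDecoupled A y) {C : ℝ}
    (hC : ∀ p, IsUnit (A p).det → ∀ i j, |(A p)⁻¹ i j| ≤ C) (h3 : H3 A)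
    (hV : IsBellmanSol A y V) (hε : 0 ≤ ε) (hreach : ∀ i, ∃ k, ReachesSDD A y U ε k i)
    (i : Fin n) : U i - V i ≤ n * C * ε := by
  obtain ⟨q, r, hq, hr⟩ := exists_control_isSDDChainRank hrd hreach
  obtain ⟨hZ, hW, hdiag, -⟩ := h3 q
  have hmono : ∀ x, 0 ≤ A q *ᵥ x → 0 ≤ x := fun x => hZ.nonneg_of_mulVec_nonneg hW hdiag hr
  have hUV : A q *ᵥ (U - V) ≤ fun _ => ε := fun j => by
    have hUq : -ε ≤ y q j - (A q *ᵥ U) j := hq j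
    rw [Matrix.mulVec_sub, Pi.sub_apply]
    linarith [hV.residual_nonpos q j]
  simpa using Matrix.le_card_mul_of_mulVec_le hmono
    (hC q (Matrix.isUnit_det_of_mulVec_nonneg_imp hmono)) hε hUV i

theorem mbb_apply (z : Fin n → EReal) (i : Fin n) : Mbb A y z i = ⨆ p, mbbTerm A y p z i := rfl

theorem mbbTerm_of_sddRow {p : ∀ i, P i} {i : Fin n} (h : SDDRow (A p) i) (z : Fin n → EReal) :
    mbbTerm A y p z i = ⊥ := by
  simp only [mbbTerm, yhat, if_pos h, EReal.add_bot]

theorem mbbTerm_coe_of_not_sddRow {p : ∀ i, P i} {i : Fin n} (h : ¬SDDRow (A p) i)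
    (w : Fin n → ℝ) :
    mbbTerm A y p (fun j => (w j : EReal)) i = ((w i + (y p i - (A p *ᵥ w) i) : ℝ) : EReal) := by
  have hexp : (A p *ᵥ w) i = A p i i * w i + ∑ j ∈ univ.erase i, A p i j * w j :=
    (add_sum_erase _ _ (mem_univ i)).symm
  simp only [mbbTerm, yhat, if_neg h, ← EReal.coe_mul, ← EReal.coe_finset_sum, ← EReal.coe_add]
  rw [hexp]
  simp only [neg_mul, sum_neg_distrib]
  ring_nf

theorem mbbTerm_mono (h3 : H3 A) {p : ∀ i, P i} {i : Fin n} {z w : Fin n → EReal}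
    (h : ∀ j, (j = i ∨ A p i j ≠ 0) → z j ≤ w j) : mbbTerm A y p z i ≤ mbbTerm A y p w i := by
  by_cases hs : SDDRow (A p) i
  · rw [mbbTerm_of_sddRow hs, mbbTerm_of_sddRow hs]
  obtain ⟨hZ, -, -, hle1⟩ := h3 p
  refine add_le_add (add_le_add ?_ (sum_le_sum fun j hj => ?_)) le_rfl
  · exact mul_le_mul_of_nonneg_left (h i (Or.inl rfl))
      (EReal.coe_nonneg.mpr (sub_nonneg.mpr (hle1 i hs)))
  · rcases eq_or_ne (A p i j) 0 with h0 | h0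
    · simp [h0]
    · exact mul_le_mul_of_nonneg_left (h j (Or.inr h0))
        (EReal.coe_nonneg.mpr (neg_nonneg.mpr (hZ i j (ne_of_mem_erase hj).symm)))

theorem mbb_monotone (h3 : H3 A) : Monotone (Mbb A y) :=
  fun _ _ h _ => iSup_mono fun _ => mbbTerm_mono h3 fun j _ => h j

theorem mbb_coe_le (hU : IsBellmanSol A y U) :
    Mbb A y (fun j => (U j : EReal)) ≤ fun j => (U j : EReal) := by
  intro i
  rw [mbb_apply]
  refine iSup_le fun p => ?_
  by_cases hs : SDDRow (A p) i
  · rw [mbbTerm_of_sddRow hs]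
    exact bot_le
  · rw [mbbTerm_coe_of_not_sddRow hs]
    exact EReal.coe_le_coe_iff.mpr (by linarith [hU.residual_nonpos p i])

theorem iterate_mbb_coe_le (h3 : H3 A) (hU : IsBellmanSol A y U) (m : ℕ) :
    (Mbb A y)^[m] (fun j => (U j : EReal)) ≤ fun j => (U j : EReal) :=
  (mbb_monotone h3).antitone_iterate_of_map_le (mbb_coe_le hU) (Nat.zero_le m)

theorem IsTrap.mono {J : Set (Fin n)} (hJ : IsTrap A y U ε J) {ε' : ℝ} (hε' : ε' ≤ ε) :
    IsTrap A y U ε' J :=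
  fun i hi p hp => hJ i hi p ((neg_le_neg hε').trans hp)

theorem IsTrap.coe_sub_le_iterate_mbb (h3 : H3 A) (hU : IsBellmanSol A y U) (hε : 0 < ε)
    {J : Set (Fin n)} (hJ : IsTrap A y U ε J) (m : ℕ) :
    ∀ i ∈ J, ((U i - m * ε : ℝ) : EReal) ≤ (Mbb A y)^[m] (fun j => (U j : EReal)) i := by
  induction m with
  | zero => intro i _; simp
  | succ m ih =>
    intro i hi
    obtain ⟨p, hp⟩ := hU.exists_isNearOptimal hε i
    obtain ⟨hs, hJp⟩ := hJ i hi p hp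
    obtain ⟨hZ, hW, hdiag, -⟩ := h3 p
    set W : Fin n → ℝ := fun j => U j - m * ε
    -- a non-SDD row of `A p` has zero row sum, so shifting `U` by a constant leaves it unchanged
    have hAW : (A p *ᵥ W) i = (A p *ᵥ U) i := by
      simp only [W, Matrix.mulVec, dotProduct, mul_sub, sum_sub_distrib, ← sum_mul,
        hZ.sum_row_eq_zero_of_not_sddRow hW (hdiag i) hs, zero_mul, sub_zero]
    rw [Function.iterate_succ_apply', mbb_apply]
    calc ((U i - (m + 1 : ℕ) * ε : ℝ) : EReal)
        ≤ ((W i + (y p i - (A p *ᵥ W) i) : ℝ) : EReal) := by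
          rw [hAW, EReal.coe_le_coe_iff]
          rw [IsNearOptimal] at hp
          push_cast
          linarith
      _ = mbbTerm A y p (fun j => (W j : EReal)) i := (mbbTerm_coe_of_not_sddRow hs W).symm
      _ ≤ mbbTerm A y p ((Mbb A y)^[m] fun j => (U j : EReal)) i := by
          refine mbbTerm_mono h3 fun j hj => ih j ?_
          by_cases hji : j = i
          · exact hji ▸ hi
          · exact hJp j hji (hj.resolve_left hji)
      _ ≤ ⨆ q, mbbTerm A y q ((Mbb A y)^[m] fun j => (U j : EReal)) i :=
          le_iSup (fun q => mbbTerm A y q _ i) p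

theorem IsTrap.eq_empty (h3 : H3 A) (h4 : H4 A y) (hU : IsBellmanSol A y U) (hε : 0 < ε)
    {J : Set (Fin n)} (hJ : IsTrap A y U ε J) : J = ∅ := by
  refine Set.eq_empty_of_forall_notMem fun i hi => ?_
  obtain ⟨m₁, m₂, -, hdrop⟩ := h4 U i
  have hupper := iterate_mbb_coe_le h3 hU m₁ i
  have hlower : (U i : EReal) ≤ (Mbb A y)^[m₂] (fun j => (U j : EReal)) i := by
    have hlim : Tendsto (fun δ : ℝ => ((U i - m₂ * δ : ℝ) : EReal)) (𝓝[>] 0) (𝓝 (U i : EReal)) := by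
      have : Continuous fun δ : ℝ => ((U i - m₂ * δ : ℝ) : EReal) :=
        continuous_coe_real_ereal.comp (by fun_prop)
      simpa using (this.tendsto 0).mono_left nhdsWithin_le_nhds
    refine le_of_tendsto hlim ?_
    filter_upwards [Ioo_mem_nhdsGT hε] with δ hδ
    exact (hJ.mono hδ.2.le).coe_sub_le_iterate_mbb h3 hU hδ.1 m₂ i hi
  exact (hdrop.trans_le hupper).not_ge hlower

theorem exists_reachesSDD (h3 : H3 A) (h4 : H4 A y) (hU : IsBellmanSol A y U)
    (hε : 0 < ε) (i : Fin n) : ∃ k, ReachesSDD A y U ε k i := by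
  have hJ : IsTrap A y U ε {i | ∀ k, ¬ReachesSDD A y U ε k i} := fun i hi p hp =>
    ⟨fun hs => hi 1 ⟨p, hp, Or.inl hs⟩,
      fun j hji hA k hk => hi (k + 1) ⟨p, hp, Or.inr ⟨j, hji, hA, hk⟩⟩⟩
  by_contra! hi
  exact (hJ.eq_empty h3 h4 hU hε).subset hi

theorem IsBellmanSol.le (hrd : RowDecoupled A y) (h1 : H1 A) (h3 : H3 A) (h4 : H4 A y)
    (hU : IsBellmanSol A y U) (hV : IsBellmanSol A y V) : U ≤ V := by
  obtain ⟨C, hC⟩ := h1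
  intro i
  have hlim : Tendsto (fun ε : ℝ => V i + n * C * ε) (𝓝[>] 0) (𝓝 (V i)) := by
    have : Continuous fun ε : ℝ => V i + n * C * ε := by fun_prop
    simpa using (this.tendsto 0).mono_left nhdsWithin_le_nhds
  refine ge_of_tendsto hlim (eventually_nhdsWithin_of_forall fun ε (hε : 0 < ε) => ?_)
  linarith [sub_le_of_forall_reachesSDD hrd hC h3 hV hε.le (exists_reachesSDD h3 h4 hU hε) i]

end Bellman

theorem bellman_solution_unique_general
    {n : ℕ} {P : Fin n → Type*}
    (A : (∀ i, P i) → Matrix (Fin n) (Fin n) ℝ) (y : (∀ i, P i) → Fin n → ℝ)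
    (hrd : RowDecoupled A y) (h1 : H1 A) (h3 : H3 A) (h4 : H4 A y)
    (U V : Fin n → ℝ) (hU : IsBellmanSol A y U) (hV : IsBellmanSol A y V) :
    U = V :=
  le_antisymm (hU.le hrd h1 h3 h4 hV) (hV.le hrd h1 h3 h4 hU)

/-- Under (H1), (H3) and (H4), the Bellman problem has at most one solution. -/
theorem bellman_solution_unique
    {n : ℕ} (hn : 1 ≤ n) {P : Fin n → Type*} [∀ i, Nonempty (P i)]
    (A : (∀ i, P i) → Matrix (Fin n) (Fin n) ℝ) (y : (∀ i, P i) → Fin n → ℝ)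
    (hrd : RowDecoupled A y) (h1 : H1 A) (h3 : H3 A) (h4 : H4 A y)
    (U V : Fin n → ℝ) (hU : IsBellmanSol A y U) (hV : IsBellmanSol A y V) :
    U = V :=
  bellman_solution_unique_general A y hrd h1 h3 h4 U V hU hV
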